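/- Let φ ∈ F and x: ℝ → ℝ continuous with x = φ on (-∞,0]. Then the map u: [0,∞) → F defined by [u(t)](θ) = x(t+θ) is continuous when F carries the topology generated by the seminorms {‖·‖_k} ∪ {p_k}. -/

import Mathlib

open Filter Set

/-- sup_{s ∈ [0, kτ₁]} |b_i φ(s − τ_i)|  (τ₁ = τ 0 with ℕ-indexing). -/
noncomputable def pTerm (b τ : ℕ → ℝ) (φ : ℝ → ℝ) (k i : ℕ) : ℝ :=
  ⨆ s : Set.Icc (0:ℝ) ((k : ℝ) * τ 0), |b i * φ ((s : ℝ) - τ i)|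

/-- The seminorm p_k(φ) = Σ_{i ≥ n(k)} sup_{s ∈ [0,kτ₁]} |b_i φ(s − τ_i)|. -/
noncomputable def pSemi (b τ : ℕ → ℝ) (n : ℕ → ℕ) (φ : ℝ → ℝ) (k : ℕ) : ℝ :=
  ∑' i : ℕ, pTerm b τ φ k (n k + i)

/-- The seminorm ‖φ‖_k = sup_{θ ∈ [−k,0]} |φ(θ)|. -/
noncomputable def normSemi (φ : ℝ → ℝ) (k : ℕ) : ℝ :=
  ⨆ θ : Set.Icc (-(k:ℝ)) (0:ℝ), |φ (θ : ℝ)|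

/-- n(k) is the smallest natural number such that τ_i ≥ kτ₁ for all i ≥ n(k). -/
def nSpec (τ : ℕ → ℝ) (n : ℕ → ℕ) : Prop :=
  ∀ k : ℕ, (∀ i, n k ≤ i → (k : ℝ) * τ 0 ≤ τ i) ∧
    ∀ m : ℕ, (∀ i, m ≤ i → (k : ℝ) * τ 0 ≤ τ i) → n k ≤ m

/-- Membership in the Fréchet space F: φ is continuous on (-∞,0] and
p_k(φ) < ∞ (i.e. the defining series is summable) for every k. -/
def memF (b τ : ℕ → ℝ) (n : ℕ → ℕ) (φ : ℝ → ℝ) : Prop :=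
  ContinuousOn φ (Set.Iic 0) ∧
    ∀ k : ℕ, Summable fun i => pTerm b τ φ k (n k + i)

/-!
Both `‖u(t) - u(t₀)‖_k` and each single term of the series `p_k(u(t) - u(t₀))` are suprema of
`|y(t + s) - y(t₀ + s)|` over a compact interval of `s`, for a continuous `y`, and so tend to `0`
by uniform continuity. To pass to the whole series, pick `K` with `Kτ₁ ≥ t₀ + 1 + kτ₁`:
for `0 ≤ t ≤ t₀ + 1` the terms of index `≥ n(K)` only see `φ` and are at most twice the terms of
the convergent series `p_K(φ)`, so dominated convergence applies to the tail.
-/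

open Topology

/-- The finitely many terms before `N` converge, hence are eventually bounded. -/
theorem tendsto_tsum_of_tendsto_of_tail_dominated {α G : Type*} [NormedAddCommGroup G]
    [CompleteSpace G] {l : Filter α} {f : α → ℕ → G} {F : ℕ → G} {g : ℕ → ℝ} (N : ℕ)
    (hg : Summable g) (hf : ∀ i, Tendsto (f · i) l (𝓝 (F i)))
    (hdom : ∀ᶠ a in l, ∀ i, ‖f a (i + N)‖ ≤ g i) :
    Tendsto (fun a => ∑' i, f a i) l (𝓝 (∑' i, F i)) := by
  set bound : ℕ → ℝ := fun i => if i < N then ‖F i‖ + 1 else g (i - N)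
  have hbound : Summable bound := by
    rw [← summable_nat_add_iff N]
    simpa [bound] using hg
  have hhead : ∀ᶠ a in l, ∀ i ∈ Finset.range N, ‖f a i‖ < ‖F i‖ + 1 :=
    (Finset.range N).eventually_all.2 fun i _ => (hf i).norm.eventually_lt_const (lt_add_one _)
  refine tendsto_tsum_of_dominated_convergence hbound hf ?_
  filter_upwards [hhead, hdom] with a ha_head ha_tail i
  by_cases hi : i < N
  · simpa [bound, hi] using (ha_head i (Finset.mem_range.2 hi)).le
  · obtain ⟨j, rfl⟩ := Nat.exists_eq_add_of_le (not_lt.1 hi)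
    simpa [bound, add_comm N j] using ha_tail j

theorem tendsto_iSup_abs_sub_shift {x : ℝ → ℝ} (hx : Continuous x) (t₀ c d : ℝ) :
    Tendsto (fun t => ⨆ s : Icc c d, |x (t + s) - x (t₀ + s)|) (𝓝 t₀) (𝓝 0) := by
  let u : ℝ → C(Icc c d, ℝ) := fun t =>
    ⟨fun s => x (t + s), hx.comp (continuous_const.add continuous_subtype_val)⟩
  have hu : Continuous u := ContinuousMap.continuous_of_continuous_uncurry _ <|
    hx.comp (continuous_fst.add (continuous_subtype_val.comp continuous_snd))
  have h : Tendsto (fun t => ‖u t - u t₀‖) (𝓝 t₀) (𝓝 0) := by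
    simpa using ((hu.tendsto t₀).sub_const (u t₀)).norm
  simpa [ContinuousMap.norm_eq_iSup_norm, u, Real.norm_eq_abs] using h

theorem nSpec.monotone {τ : ℕ → ℝ} {n : ℕ → ℕ} (hn : nSpec τ n) (hτ₀ : 0 ≤ τ 0) : Monotone n :=
  fun k K hkK => (hn k).2 _ fun i hi =>
    (mul_le_mul_of_nonneg_right (Nat.cast_le.2 hkK) hτ₀).trans ((hn K).1 i hi)

section pTerm

variable {b τ : ℕ → ℝ} {φ : ℝ → ℝ}

theorem pTerm_nonneg (k i : ℕ) : 0 ≤ pTerm b τ φ k i :=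
  Real.iSup_nonneg fun _ => abs_nonneg _

theorem pTerm_le {k i : ℕ} {C : ℝ} (hC : 0 ≤ C)
    (h : ∀ s ∈ Icc 0 ((k : ℝ) * τ 0), |b i * φ (s - τ i)| ≤ C) : pTerm b τ φ k i ≤ C :=
  Real.iSup_le (fun s => h s s.2) hC

theorem le_pTerm (hφ : ContinuousOn φ (Iic 0)) {K m : ℕ} (hm : (K : ℝ) * τ 0 ≤ τ m) {s : ℝ}
    (hs : s ∈ Icc 0 ((K : ℝ) * τ 0)) : |b m * φ (s - τ m)| ≤ pTerm b τ φ K m := by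
  have hcont : ContinuousOn (fun s => |b m * φ (s - τ m)|) (Icc 0 ((K : ℝ) * τ 0)) :=
    (continuousOn_const.mul (hφ.comp (continuousOn_id.sub continuousOn_const)
      fun s hs => show s - τ m ≤ 0 by linarith [hs.2])).abs
  exact le_ciSup (isCompact_range hcont.domRestrict).bddAbove ⟨s, hs⟩

theorem tendsto_pTerm_shift_sub {x : ℝ → ℝ} (hx : Continuous x) (t₀ : ℝ) (k m : ℕ) :
    Tendsto (fun t => pTerm b τ (fun θ => x (t + θ) - x (t₀ + θ)) k m) (𝓝 t₀) (𝓝 0) := by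
  have h := tendsto_iSup_abs_sub_shift (x := fun r => b m * x (r - τ m))
    (continuous_const.mul (hx.comp (continuous_id.sub continuous_const))) t₀ 0 ((k : ℝ) * τ 0)
  refine h.congr fun t => iSup_congr fun s => ?_
  simp only [← mul_sub, add_sub_assoc]

theorem pTerm_shift_sub_le (hφ : ContinuousOn φ (Iic 0)) {x : ℝ → ℝ}
    (hxφ : ∀ θ ≤ (0 : ℝ), x θ = φ θ) {k K m : ℕ} {t t₀ : ℝ} (ht : 0 ≤ t) (ht₀ : 0 ≤ t₀)
    (htK : t + k * τ 0 ≤ K * τ 0) (ht₀K : t₀ + k * τ 0 ≤ K * τ 0) (hm : (K : ℝ) * τ 0 ≤ τ m) :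
    pTerm b τ (fun θ => x (t + θ) - x (t₀ + θ)) k m ≤ 2 * pTerm b τ φ K m := by
  have hshift : ∀ a, 0 ≤ a → a + k * τ 0 ≤ K * τ 0 → ∀ s ∈ Icc 0 ((k : ℝ) * τ 0),
      |b m * x (a + (s - τ m))| ≤ pTerm b τ φ K m := by
    intro a ha haK s hs
    rw [← add_sub_assoc, hxφ _ (by linarith [hs.2])]
    exact le_pTerm hφ hm ⟨by linarith [hs.1], by linarith [hs.2]⟩
  refine pTerm_le (mul_nonneg zero_le_two (pTerm_nonneg K m)) fun s hs => ?_
  calc |b m * (x (t + (s - τ m)) - x (t₀ + (s - τ m)))|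
      ≤ |b m * x (t + (s - τ m))| + |b m * x (t₀ + (s - τ m))| := by
        rw [mul_sub]; exact abs_sub _ _
    _ ≤ 2 * pTerm b τ φ K m := by
        linarith [hshift t ht htK s hs, hshift t₀ ht₀ ht₀K s hs]

end pTerm

theorem history_segment_continuous_general (b τ : ℕ → ℝ) (n : ℕ → ℕ)
    (hτpos : ∀ i, 0 < τ i)
    (hn : nSpec τ n)
    (φ : ℝ → ℝ) (hφ : memF b τ n φ)
    (x : ℝ → ℝ) (hxc : Continuous x) (hxφ : ∀ θ ≤ (0:ℝ), x θ = φ θ)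
    (t₀ : ℝ) (ht₀ : 0 ≤ t₀) (k : ℕ) :
    Tendsto (fun t => normSemi (fun θ => x (t + θ) - x (t₀ + θ)) k)
      (𝓝[Set.Ici (0:ℝ)] t₀) (nhds 0) ∧
    Tendsto (fun t => pSemi b τ n (fun θ => x (t + θ) - x (t₀ + θ)) k)
      (𝓝[Set.Ici (0:ℝ)] t₀) (nhds 0) := by
  refine ⟨(tendsto_iSup_abs_sub_shift hxc t₀ _ _).mono_left nhdsWithin_le_nhds, ?_⟩
  have hτ₀ := hτpos 0
  obtain ⟨K, hK⟩ := exists_nat_ge (k + (t₀ + 1) / τ 0)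
  have hKτ : t₀ + 1 + k * τ 0 ≤ K * τ 0 := by
    have := mul_le_mul_of_nonneg_right hK hτ₀.le
    rwa [add_mul, div_mul_cancel₀ _ hτ₀.ne', add_comm] at this
  have hnK : n k ≤ n K := hn.monotone hτ₀.le <|
    Nat.cast_le.1 ((le_add_of_nonneg_right (by positivity)).trans hK)
  have hnear : Icc 0 (t₀ + 1) ∈ 𝓝[Ici 0] t₀ := by
    rw [← Ici_inter_Iic]
    exact inter_mem_nhdsWithin _ (Iic_mem_nhds (lt_add_one t₀))
  have hdom : ∀ᶠ t in 𝓝[Ici 0] t₀, ∀ i,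
      ‖pTerm b τ (fun θ => x (t + θ) - x (t₀ + θ)) k (n k + (i + (n K - n k)))‖ ≤
        2 * pTerm b τ φ K (n K + i) := by
    filter_upwards [hnear] with t ht i
    rw [show n k + (i + (n K - n k)) = n K + i by omega, Real.norm_of_nonneg (pTerm_nonneg _ _)]
    exact pTerm_shift_sub_le hφ.1 hxφ ht.1 ht₀ (by linarith [ht.2]) (by linarith)
      ((hn K).1 _ (Nat.le_add_right _ _))
  have := tendsto_tsum_of_tendsto_of_tail_dominated (n K - n k) ((hφ.2 K).mul_left 2)
    (fun i => (tendsto_pTerm_shift_sub hxc t₀ k _).mono_left nhdsWithin_le_nhds) hdom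
  simpa only [pSemi, tsum_zero] using this

/-- For φ ∈ F and x : ℝ → ℝ continuous with x = φ on (-∞,0],
the map u : [0,∞) → F, u(t) = x(t + ·), is continuous for the topology of F
generated by the seminorms {‖·‖_k} ∪ {p_k}: every seminorm of u(t) − u(t₀)
tends to 0 as t → t₀ in [0,∞). -/
theorem history_segment_continuous (b τ : ℕ → ℝ) (n : ℕ → ℕ)
    (hτ : StrictMono τ) (hτpos : ∀ i, 0 < τ i)
    (hτtop : Tendsto τ atTop atTop) (hn : nSpec τ n)
    (φ : ℝ → ℝ) (hφ : memF b τ n φ)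
    (x : ℝ → ℝ) (hxc : Continuous x) (hxφ : ∀ θ ≤ (0:ℝ), x θ = φ θ)
    (t₀ : ℝ) (ht₀ : 0 ≤ t₀) (k : ℕ) :
    Tendsto (fun t => normSemi (fun θ => x (t + θ) - x (t₀ + θ)) k)
      (𝓝[Set.Ici (0:ℝ)] t₀) (nhds 0) ∧
    Tendsto (fun t => pSemi b τ n (fun θ => x (t + θ) - x (t₀ + θ)) k)
      (𝓝[Set.Ici (0:ℝ)] t₀) (nhds 0) :=
  history_segment_continuous_general b τ n hτpos hn φ hφ x hxc hxφ t₀ ht₀ k
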